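/- arXiv:2109.11805 — 4 statements merged into one kernel-verified Lean document; each statement's English description precedes it below -/
import Mathlib

section
/- Let S = k[α_1,...,α_n] act on P = k[x_1,...,x_n] by letting α_i act as the partial derivative ∂/∂x_i. Suppose g ∈ S satisfies g ∘ F = 1 and Q_i ∈ S satisfy Q_i ∘ F = x_i for a cubic F. Define Γ(t) = g(α) + t·Σ_i β_i·Q_i(α) + t²·Σ_i α_i·Q_i(β) + t³·g(β) in k[t, α, β], where β_j acts as ∂/∂y_j on k[t, x, y]. Then Γ(t) ∘ (F(x)·F(y)) = F(t·x + y). -/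
open MvPolynomial

/-- Composition of powers of the operators `op i`, with multiplicities given by `m`. -/
noncomputable def opPow {k : Type*} [CommSemiring k] {σ : Type*}
    (op : σ → Module.End k (MvPolynomial σ k)) (m : σ →₀ ℕ) :
    Module.End k (MvPolynomial σ k) :=
  m.support.toList.foldr (fun i L => (op i) ^ (m i) * L) 1

/-- The action of a "differential polynomial" `h` on `F`, each variable of `h` acting by the
operator `op i`. -/
noncomputable def apAct {k : Type*} [CommSemiring k] {σ : Type*}
    (op : σ → Module.End k (MvPolynomial σ k)) (h F : MvPolynomial σ k) : MvPolynomial σ k :=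
  h.support.sum fun m => (h.coeff m) • (opPow op m F)

/-- Apolarity contraction `h ∘ F`: each variable of `h` acts as the corresponding partial
derivative. -/
noncomputable def apContract {k : Type*} [CommSemiring k] {σ : Type*} [DecidableEq σ]
    (h F : MvPolynomial σ k) : MvPolynomial σ k :=
  apAct (fun i => (pderiv i).toLinearMap) h F

/-- The operators for the relative apolarity action on `k[t, z…]` (with `t = X none`):
`t` acts by multiplication and every other variable acts as its partial derivative. -/
noncomputable def tOp {k : Type*} [CommSemiring k] {τ : Type*} [DecidableEq τ] :
    Option τ → Module.End k (MvPolynomial (Option τ) k)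
  | none => LinearMap.mulLeft k (X none)
  | some v => (pderiv (some v)).toLinearMap

/-- Relative apolarity action of `k[t, α…]` on `k[t, x…]`: `t` acts by multiplication, and the
variable `some v` acts as `∂/∂(X (some v))`. -/
noncomputable def tAct {k : Type*} [CommSemiring k] {τ : Type*} [DecidableEq τ]
    (h F : MvPolynomial (Option τ) k) : MvPolynomial (Option τ) k :=
  apAct tOp h F

/-!
The action of `k[t, α, β]` is an algebra homomorphism into `End k[t, x, y]`, because the operators
(`t` by multiplication, `α_i = ∂/∂x_i`, `β_i = ∂/∂y_i`) commute, and a polynomial in the `α`'s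
alone acts on `F(x)·F(y)` through the factor `F(x)` only. With `g ∘ F = 1` and `Q_i ∘ F = x_i`
the four summands of `Γ(t)` therefore send `F(x)·F(y)` to `F(y)`, `t·Σ x_i (∂_iF)(y)`,
`t²·Σ y_i (∂_iF)(x)` and `t³·F(x)`. These are the coefficients of the expansion of the cubic
`F(t·x + y)` in `t`; that expansion is linear in `F`, so it suffices to check it on products
`x_a x_b x_c`, where it is the Leibniz rule.
-/

section ApAct

variable {k σ : Type*} [CommSemiring k] {op : σ → Module.End k (MvPolynomial σ k)}

open scoped IsMulCommutative in
/-- Pairwise commuting operators generate a commutative subalgebra, into which `aeval` maps. -/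
noncomputable def apActHom (hop : ∀ i j, Commute (op i) (op j)) :
    MvPolynomial σ k →ₐ[k] Module.End k (MvPolynomial σ k) :=
  haveI := Algebra.isMulCommutative_adjoin k (s := Set.range op)
    (by rintro _ ⟨i, rfl⟩ _ ⟨j, rfl⟩; exact hop i j)
  (Algebra.adjoin k (Set.range op)).val.comp
    (aeval fun i => ⟨op i, Algebra.subset_adjoin ⟨i, rfl⟩⟩)

variable (hop : ∀ i j, Commute (op i) (op j))
include hop

theorem apActHom_X (i : σ) : apActHom hop (X i) = op i := by
  simp [apActHom]

theorem apActHom_monomial (m : σ →₀ ℕ) (c : k) :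
    apActHom hop (monomial m c) = c • opPow op m := by
  rw [monomial_eq, map_mul, algHom_C, Algebra.algebraMap_eq_smul_one, smul_mul_assoc, one_mul,
    Finsupp.prod, ← Finset.prod_map_toList, map_list_prod, opPow, ← List.foldr_map,
    ← List.prod_eq_foldr]
  simp [List.map_map, Function.comp_def, apActHom_X hop]

theorem apAct_eq_apActHom (h : MvPolynomial σ k) : apAct op h = apActHom hop h := by
  ext1 F
  conv_rhs => rw [← support_sum_monomial_coeff h]
  simp only [apAct, map_sum, apActHom_monomial hop, LinearMap.sum_apply, LinearMap.smul_apply]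

theorem apAct_mul (h₁ h₂ F : MvPolynomial σ k) :
    apAct op (h₁ * h₂) F = apAct op h₁ (apAct op h₂ F) := by
  simp only [apAct_eq_apActHom hop, map_mul, Module.End.mul_apply]

theorem apAct_add (h₁ h₂ F : MvPolynomial σ k) :
    apAct op (h₁ + h₂) F = apAct op h₁ F + apAct op h₂ F := by
  simp only [apAct_eq_apActHom hop, map_add, LinearMap.add_apply]

theorem apAct_sum {ι : Type*} (s : Finset ι) (h : ι → MvPolynomial σ k) (F : MvPolynomial σ k) :
    apAct op (∑ i ∈ s, h i) F = ∑ i ∈ s, apAct op (h i) F := by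
  simp only [apAct_eq_apActHom hop, map_sum, LinearMap.sum_apply]

theorem apAct_C (c : k) (F : MvPolynomial σ k) : apAct op (C c) F = c • F := by
  simp only [apAct_eq_apActHom hop, algHom_C, Module.algebraMap_end_apply]

theorem apAct_X (i : σ) (F : MvPolynomial σ k) : apAct op (X i) F = op i F := by
  rw [apAct_eq_apActHom hop, apActHom_X]

end ApAct

theorem commute_pderiv {k σ : Type*} [CommSemiring k] (i j : σ) :
    Commute ((pderiv i).toLinearMap : Module.End k (MvPolynomial σ k)) (pderiv j).toLinearMap := by
  classical
  refine LinearMap.ext fun f => ?_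
  induction f using MvPolynomial.induction_on with
  | C c => simp
  | add p q hp hq => simp_all
  | mul_X p s hp =>
    simp only [Module.End.mul_apply, Derivation.coeFn_coe] at hp ⊢
    simp only [pderiv_mul, map_add, hp, pderiv_X, Pi.single_apply]
    split_ifs <;> simp [add_right_comm]

theorem commute_tOp {k τ : Type*} [CommSemiring k] [DecidableEq τ] (i j : Option τ) :
    Commute (tOp (k := k) i) (tOp j) := by
  have commute_none (v : τ) : Commute (tOp (k := k) none) (tOp (some v)) :=
    LinearMap.ext fun f => by simp [tOp]
  match i, j with
  | none, none => exact .refl _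
  | none, some v => exact commute_none v
  | some v, none => exact (commute_none v).symm
  | some v, some w => exact commute_pderiv (some v) (some w)

section Polar

open scoped Pointwise

variable {k σ A : Type*} [CommSemiring k] [Fintype σ] [CommSemiring A] [Algebra k A]

noncomputable def polar (φ : MvPolynomial σ k →ₐ[k] A) (v : σ → A) : MvPolynomial σ k →ₗ[k] A :=
  ∑ i, v i • (φ.toLinearMap ∘ₗ (pderiv i).toLinearMap)

variable (φ : MvPolynomial σ k →ₐ[k] A) (v : σ → A)

theorem polar_apply (G : MvPolynomial σ k) : polar φ v G = ∑ i, v i * φ (pderiv i G) := by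
  simp [polar]

theorem polar_X (j : σ) : polar φ v (X j) = v j := by
  classical
  simp [polar_apply, pderiv_X, Pi.single_apply]

theorem polar_mul (G H : MvPolynomial σ k) :
    polar φ v (G * H) = φ G * polar φ v H + φ H * polar φ v G := by
  simp only [polar_apply, Finset.mul_sum, ← Finset.sum_add_distrib]
  refine Finset.sum_congr rfl fun i _ => ?_
  rw [pderiv_mul, map_add, map_mul, map_mul]
  ring

omit [Fintype σ] in
theorem homogeneousSubmodule_three_eq_span :
    homogeneousSubmodule σ k 3
      = Submodule.span k (Set.range (X (R := k) (σ := σ)) * Set.range X * Set.range X) := by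
  rw [← homogeneousSubmodule_one_pow, homogeneousSubmodule_one_eq_span_X, pow_three',
    Submodule.span_mul_span, Submodule.span_mul_span]

theorem aeval_mul_add_eq_of_isHomogeneous_three {G : MvPolynomial σ k} (hG : G.IsHomogeneous 3)
    (t : A) (x y : σ → A) :
    aeval (fun i => t * x i + y i) G = t ^ 3 * aeval x G + t ^ 2 * polar (aeval x) y G
      + t * polar (aeval y) x G + aeval y G := by
  have hG' : G ∈ Submodule.span k (Set.range (X (R := k) (σ := σ)) * Set.range X * Set.range X) :=
    homogeneousSubmodule_three_eq_span (k := k) ▸ hG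
  refine LinearMap.eqOn_span (R := k)
    (f := (aeval fun i => t * x i + y i).toLinearMap)
    (g := t ^ 3 • (aeval x).toLinearMap + t ^ 2 • polar (aeval x) y + t • polar (aeval y) x
      + (aeval y).toLinearMap) ?_ hG'
  rintro _ ⟨_, ⟨_, ⟨a, rfl⟩, _, ⟨b, rfl⟩, rfl⟩, _, ⟨c, rfl⟩, rfl⟩
  simp [polar_mul, polar_X]
  ring

end Polar

theorem aeval_X_eq_rename {k σ τ : Type*} [CommSemiring k] (f : σ → τ) :
    (aeval fun i => X (f i) : MvPolynomial σ k →ₐ[k] MvPolynomial τ k) = rename f :=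
  (rename_eq_aeval f).symm

section RelativeAction

variable {k τ : Type*} [CommSemiring k] [DecidableEq τ]

theorem tAct_add (h₁ h₂ F : MvPolynomial (Option τ) k) :
    tAct (h₁ + h₂) F = tAct h₁ F + tAct h₂ F :=
  apAct_add commute_tOp h₁ h₂ F

theorem tAct_mul (h₁ h₂ F : MvPolynomial (Option τ) k) :
    tAct (h₁ * h₂) F = tAct h₁ (tAct h₂ F) :=
  apAct_mul commute_tOp h₁ h₂ F

theorem tAct_sum {ι : Type*} (s : Finset ι) (h : ι → MvPolynomial (Option τ) k)
    (F : MvPolynomial (Option τ) k) : tAct (∑ i ∈ s, h i) F = ∑ i ∈ s, tAct (h i) F :=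
  apAct_sum commute_tOp s h F

theorem tAct_X_some (v : τ) (F : MvPolynomial (Option τ) k) :
    tAct (X (some v)) F = pderiv (some v) F :=
  apAct_X commute_tOp (some v) F

theorem tAct_X_none_pow_mul (j : ℕ) (h F : MvPolynomial (Option τ) k) :
    tAct (X none ^ j * h) F = X none ^ j * tAct h F := by
  rw [tAct_mul, tAct, tAct, apAct_eq_apActHom commute_tOp, map_pow, apActHom_X, tOp,
    LinearMap.pow_mulLeft, LinearMap.mulLeft_apply]

theorem tAct_X_none_mul (h F : MvPolynomial (Option τ) k) :
    tAct (X none * h) F = X none * tAct h F := by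
  simpa using tAct_X_none_pow_mul 1 h F

theorem pderiv_rename_eq_zero {σ : Type*} {f : σ → τ} {j : τ} (hj : j ∉ Set.range f)
    (p : MvPolynomial σ k) : pderiv j (rename f p) = 0 :=
  pderiv_eq_zero_of_notMem_vars fun hjp => by
    obtain ⟨i, -, rfl⟩ := Finset.mem_image.mp (vars_rename f p hjp)
    exact hj ⟨i, rfl⟩

theorem tAct_rename_mul {σ : Type*} [DecidableEq σ] {f : σ → τ} (hf : Function.Injective f)
    {G : MvPolynomial (Option τ) k} (hG : ∀ i, pderiv (some (f i)) G = 0)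
    (h A : MvPolynomial σ k) :
    tAct (rename (fun j => some (f j)) h) (rename (fun j => some (f j)) A * G)
      = rename (fun j => some (f j)) (apContract h A) * G := by
  unfold apContract
  induction h using MvPolynomial.induction_on generalizing A with
  | C c =>
    rw [rename_C, tAct, apAct_C commute_tOp, apAct_C commute_pderiv, map_smul, smul_mul_assoc]
  | add p q hp hq =>
    rw [map_add, tAct_add, hp, hq, apAct_add commute_pderiv, map_add, add_mul]
  | mul_X p i hp =>
    have hpderiv : pderiv (some (f i)) (rename (fun j => some (f j)) A * G)
        = rename (fun j => some (f j)) (pderiv i A) * G := by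
      rw [pderiv_mul, hG, mul_zero, add_zero]
      exact congrArg (· * G) (pderiv_rename ((Option.some_injective τ).comp hf) i A)
    rw [map_mul, rename_X, tAct_mul, tAct_X_some, hpderiv, hp,
      apAct_mul commute_pderiv, apAct_X commute_pderiv]
    rfl

end RelativeAction

section TwoCopies

variable {k σ : Type*} [CommSemiring k] [DecidableEq σ]

theorem tAct_rename_inl_mul (h A B : MvPolynomial σ k) :
    tAct (rename (fun j => some (Sum.inl j)) h)
        (rename (fun j => some (Sum.inl j)) A * rename (fun j => some (Sum.inr j)) B)
      = rename (fun j => some (Sum.inl j)) (apContract h A)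
        * rename (fun j => some (Sum.inr j)) B :=
  tAct_rename_mul Sum.inl_injective
    (fun _ => pderiv_rename_eq_zero (f := fun j => some (Sum.inr j)) (by simp) B) h A

theorem tAct_rename_inr_mul (h A B : MvPolynomial σ k) :
    tAct (rename (fun j => some (Sum.inr j)) h)
        (rename (fun j => some (Sum.inl j)) A * rename (fun j => some (Sum.inr j)) B)
      = rename (fun j => some (Sum.inl j)) A
        * rename (fun j => some (Sum.inr j)) (apContract h B) := by
  rw [mul_comm, tAct_rename_mul Sum.inr_injective
    (fun _ => pderiv_rename_eq_zero (f := fun j => some (Sum.inl j)) (by simp) A) h B, mul_comm]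

theorem tAct_X_inr_mul_rename_inl {Q A : MvPolynomial σ k} {i : σ} (hQ : apContract Q A = X i)
    (B : MvPolynomial σ k) :
    tAct (X (some (Sum.inr i)) * rename (fun j => some (Sum.inl j)) Q)
        (rename (fun j => some (Sum.inl j)) A * rename (fun j => some (Sum.inr j)) B)
      = X (some (Sum.inl i)) * rename (fun j => some (Sum.inr j)) (pderiv i B) := by
  rw [tAct_mul, tAct_rename_inl_mul, hQ, tAct_X_some, pderiv_mul,
    pderiv_rename (f := fun j : σ => some (Sum.inr j))
      ((Option.some_injective _).comp Sum.inr_injective) i B, rename_X,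
    pderiv_X_of_ne (by simp), zero_mul, zero_add]

theorem tAct_X_inl_mul_rename_inr {Q B : MvPolynomial σ k} {i : σ} (hQ : apContract Q B = X i)
    (A : MvPolynomial σ k) :
    tAct (X (some (Sum.inl i)) * rename (fun j => some (Sum.inr j)) Q)
        (rename (fun j => some (Sum.inl j)) A * rename (fun j => some (Sum.inr j)) B)
      = X (some (Sum.inr i)) * rename (fun j => some (Sum.inl j)) (pderiv i A) := by
  rw [tAct_mul, tAct_rename_inr_mul, hQ, tAct_X_some, pderiv_mul,
    pderiv_rename (f := fun j : σ => some (Sum.inl j))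
      ((Option.some_injective _).comp Sum.inl_injective) i A, rename_X,
    pderiv_X_of_ne (by simp), mul_zero, add_zero, mul_comm]

end TwoCopies

theorem gamma_act_eq_general {k : Type*} [Field k] {n : ℕ}
    (F : MvPolynomial (Fin n) k) (hF : F.IsHomogeneous 3)
    (g : MvPolynomial (Fin n) k) (hg : apContract g F = 1)
    (Q : Fin n → MvPolynomial (Fin n) k) (hQ : ∀ i, apContract (Q i) F = X i) :
    letI B := MvPolynomial (Option (Fin n ⊕ Fin n)) k
    letI ια : MvPolynomial (Fin n) k →ₐ[k] B :=
      aeval fun i : Fin n => X (some (Sum.inl i))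
    letI ιβ : MvPolynomial (Fin n) k →ₐ[k] B :=
      aeval fun i : Fin n => X (some (Sum.inr i))
    letI Γ : B := ια g + X none * ∑ i : Fin n, X (some (Sum.inr i)) * ια (Q i)
      + (X none) ^ 2 * ∑ i : Fin n, X (some (Sum.inl i)) * ιβ (Q i)
      + (X none) ^ 3 * ιβ g
    tAct Γ (ια F * ιβ F)
      = aeval (fun i : Fin n =>
          (X none * X (some (Sum.inl i)) + X (some (Sum.inr i)) : B)) F := by
  rw [aeval_mul_add_eq_of_isHomogeneous_three hF, polar_apply, polar_apply,
    aeval_X_eq_rename fun j => some (Sum.inl j), aeval_X_eq_rename fun j => some (Sum.inr j)]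
  simp only [tAct_add, tAct_sum, tAct_X_none_mul, tAct_X_none_pow_mul, tAct_rename_inl_mul,
    tAct_rename_inr_mul, tAct_X_inr_mul_rename_inl (hQ _), tAct_X_inl_mul_rename_inr (hQ _), hg,
    map_one]
  ring

/-- **The fractal polynomial Γ(t).** Suppose `g ∘ F = 1` and `Q_i ∘ F = x_i` for the apolarity
action of `S = k[α]` on `P = k[x]` (`α_i = ∂/∂x_i`), where `F` is a homogeneous cubic. In
`k[t,α,β] = k[t,x,y] = MvPolynomial (Option (Fin n ⊕ Fin n)) k`
(with `t = X none`, `α_i = x_i = X (some (Sum.inl i))`, `β_i = y_i = X (some (Sum.inr i))`),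
set `Γ(t) = g(α) + t·Σ_i β_i·Q_i(α) + t²·Σ_i α_i·Q_i(β) + t³·g(β)`. Then for the relative
apolarity action (`α_i = ∂/∂x_i`, `β_i = ∂/∂y_i`, `t` by multiplication) one has
`Γ(t) ∘ (F(x)·F(y)) = F(t·x + y)`. -/
theorem gamma_act_eq {k : Type*} [Field k] [CharZero k] {n : ℕ}
    (F : MvPolynomial (Fin n) k) (hF : F.IsHomogeneous 3)
    (g : MvPolynomial (Fin n) k) (hg : apContract g F = 1)
    (Q : Fin n → MvPolynomial (Fin n) k) (hQ : ∀ i, apContract (Q i) F = X i) :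
    letI B := MvPolynomial (Option (Fin n ⊕ Fin n)) k
    letI ια : MvPolynomial (Fin n) k →ₐ[k] B :=
      aeval fun i : Fin n => X (some (Sum.inl i))
    letI ιβ : MvPolynomial (Fin n) k →ₐ[k] B :=
      aeval fun i : Fin n => X (some (Sum.inr i))
    letI Γ : B := ια g + X none * ∑ i : Fin n, X (some (Sum.inr i)) * ια (Q i)
      + (X none) ^ 2 * ∑ i : Fin n, X (some (Sum.inl i)) * ιβ (Q i)
      + (X none) ^ 3 * ιβ g
    tAct Γ (ια F * ιβ F)
      = aeval (fun i : Fin n =>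
          (X none * X (some (Sum.inl i)) + X (some (Sum.inr i)) : B)) F :=
  gamma_act_eq_general F hF g hg Q hQ
end

section
/- Let I ⊆ S = k[α_1,...,α_6] be a homogeneous ideal such that S/I has Hilbert function (1, 6, 6) (i.e., (S/I)_0 = k, dim (S/I)_1 = dim (S/I)_2 = 6, (S/I)_n = 0 for n ≥ 3) and I is generated by elements of degree ≤ 3. Then every homogeneous S-module homomorphism δ : I → S/I of positive degree (i.e., δ(I_n) ⊆ (S/I)_{n+d} for some d ≥ 1) is zero. -/
/-!
Since `δ` is additive and `I` is homogeneous, it suffices that `δ` kills every homogeneous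
`f ∈ I` of degree `n`. For `n ≥ 2` its image lies in `(S/I)_{n+d} = 0`, as `n + d ≥ 3`.
For `n = 0` and `n = 1` there is nothing to kill: `I` is proper because `(S/I)_0 ≠ 0`, so it
contains no nonzero constant, and `S_1 → (S/I)_1` is a surjection between spaces of dimension
`6`, hence injective, so `I_1 = 0`.
-/

open MvPolynomial Module

theorem Submodule.eq_zero_of_mem_of_finrank_le_finrank_map {k V M : Type*} [Field k]
    [AddCommGroup V] [Module k V] [AddCommGroup M] [Module k M] {p : Submodule k V}
    [FiniteDimensional k p] (q : V →ₗ[k] M) (h : finrank k p ≤ finrank k (p.map q))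
    {x : V} (hx : x ∈ p) (hqx : q x = 0) : x = 0 := by
  have hrank := (q.domRestrict p).finrank_range_add_finrank_ker
  rw [LinearMap.range_domRestrict] at hrank
  have hker : LinearMap.ker (q.domRestrict p) = ⊥ :=
    Submodule.finrank_eq_zero.mp (by omega)
  have : (⟨x, hx⟩ : p) ∈ LinearMap.ker (q.domRestrict p) := hqx
  rw [hker] at this
  exact congrArg Subtype.val ((Submodule.mem_bot k).mp this)

namespace MvPolynomial

variable {σ R k : Type*} [CommSemiring R] [Field k]

instance [Finite σ] (n : ℕ) : Module.Finite R (homogeneousSubmodule σ R n) :=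
  Module.Finite.iff_fg.mpr (homogeneousSubmodule_fg σ R n)

theorem finrank_homogeneousSubmodule_one_le [Fintype σ] :
    finrank k (homogeneousSubmodule σ k 1) ≤ Fintype.card σ := by
  rw [homogeneousSubmodule_one_eq_span_X]
  exact finrank_range_le_card X

theorem eq_zero_of_mem_of_isHomogeneous_zero {I : Ideal (MvPolynomial σ k)} (hI : I ≠ ⊤)
    {g : MvPolynomial σ k} (hg : g ∈ I) (hg0 : g.IsHomogeneous 0) : g = 0 := by
  have hgC := totalDegree_eq_zero_iff_eq_C.mp ((totalDegree_zero_iff_isHomogeneous σ).mpr hg0)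
  rw [hgC] at hg ⊢
  by_contra hc
  exact hI (I.eq_top_of_isUnit_mem hg ((isUnit_iff_ne_zero.mpr (mt C_eq_zero.mpr hc)).map C))

theorem _root_.LinearMap.eq_zero_of_apply_isHomogeneous_eq_zero
    {I : Ideal (MvPolynomial σ R)} (hI : ∀ f ∈ I, ∀ n, homogeneousComponent n f ∈ I)
    {M : Type*} [AddCommMonoid M] [Module (MvPolynomial σ R) M]
    (δ : I →ₗ[MvPolynomial σ R] M)
    (h : ∀ n (f : I), (f : MvPolynomial σ R).IsHomogeneous n → δ f = 0) : δ = 0 := by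
  ext ⟨f, hf⟩
  have hsum : (⟨f, hf⟩ : I) = ∑ n ∈ Finset.range (f.totalDegree + 1),
      ⟨homogeneousComponent n f, hI f hf n⟩ :=
    Subtype.ext (by simpa using (sum_homogeneousComponent f).symm)
  rw [hsum, map_sum]
  exact Finset.sum_eq_zero fun n _ => h n _ (homogeneousComponent_isHomogeneous n f)

end MvPolynomial

theorem positive_degree_hom_vanishes_general {k : Type*} [Field k]
    (I : Ideal (MvPolynomial (Fin 6) k))
    (hhom : ∀ f ∈ I, ∀ n : ℕ, homogeneousComponent n f ∈ I)
    (W : ℕ → Submodule k (MvPolynomial (Fin 6) k ⧸ I))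
    (hW : W = fun d => Submodule.map (Ideal.Quotient.mkₐ k I).toLinearMap
      (homogeneousSubmodule (Fin 6) k d))
    (h0 : Module.finrank k (W 0) = 1)
    (h1 : Module.finrank k (W 1) = 6)
    (h3 : ∀ n, 3 ≤ n → Module.finrank k (W n) = 0)
    (δ : I →ₗ[MvPolynomial (Fin 6) k] (MvPolynomial (Fin 6) k ⧸ I))
    (d : ℕ) (hd : 1 ≤ d)
    (hdeg : ∀ (n : ℕ) (f : MvPolynomial (Fin 6) k) (hf : f ∈ I),
      f ∈ homogeneousSubmodule (Fin 6) k n → δ ⟨f, hf⟩ ∈ W (n + d)) :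
    δ = 0 := by
  subst hW
  beta_reduce at h0 h1 h3 hdeg
  have hI : I ≠ ⊤ := by
    rintro rfl
    have : Subsingleton (MvPolynomial (Fin 6) k ⧸ (⊤ : Ideal (MvPolynomial (Fin 6) k))) :=
      Ideal.Quotient.subsingleton_iff.mpr rfl
    rw [finrank_zero_of_subsingleton] at h0
    exact zero_ne_one h0
  have hI1 : ∀ g ∈ I, g.IsHomogeneous 1 → g = 0 := fun g hg hg1 =>
    Submodule.eq_zero_of_mem_of_finrank_le_finrank_map (Ideal.Quotient.mkₐ k I).toLinearMap
      (by rw [h1]; exact finrank_homogeneousSubmodule_one_le.trans_eq (Fintype.card_fin 6)) hg1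
      (Ideal.Quotient.eq_zero_iff_mem.mpr hg)
  refine δ.eq_zero_of_apply_isHomogeneous_eq_zero hhom fun n f hfn => ?_
  match n, hfn with
  | 0, hf0 =>
    rw [Submodule.coe_eq_zero.mp (eq_zero_of_mem_of_isHomogeneous_zero hI f.2 hf0), map_zero]
  | 1, hf1 => rw [Submodule.coe_eq_zero.mp (hI1 f f.2 hf1), map_zero]
  | n + 2, hfn =>
    have hvanish := Submodule.finrank_eq_zero.mp (h3 (n + 2 + d) (by omega))
    simpa [hvanish] using hdeg (n + 2) f f.2 hfn

/-- Let `I ⊆ S = k[α_1,…,α_6]` be a homogeneous ideal such that `S/I` has Hilbert function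
`(1,6,6)` and `I` is generated in degrees `≤ 3`. Then every homogeneous `S`-module
homomorphism `δ : I → S/I` of positive degree is zero. The `n`-th graded piece of `S/I` is
realised as the image of the homogeneous polynomials of degree `n`. -/
theorem positive_degree_hom_vanishes {k : Type*} [Field k]
    (I : Ideal (MvPolynomial (Fin 6) k))
    (hhom : ∀ f ∈ I, ∀ n : ℕ, homogeneousComponent n f ∈ I)
    (W : ℕ → Submodule k (MvPolynomial (Fin 6) k ⧸ I))
    (hW : W = fun d => Submodule.map (Ideal.Quotient.mkₐ k I).toLinearMap
      (homogeneousSubmodule (Fin 6) k d))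
    (h0 : Module.finrank k (W 0) = 1)
    (h1 : Module.finrank k (W 1) = 6)
    (h2 : Module.finrank k (W 2) = 6)
    (h3 : ∀ n, 3 ≤ n → Module.finrank k (W n) = 0)
    (hgen : ∃ G : Set (MvPolynomial (Fin 6) k),
      (∀ g ∈ G, g.totalDegree ≤ 3) ∧ I = Ideal.span G)
    (δ : I →ₗ[MvPolynomial (Fin 6) k] (MvPolynomial (Fin 6) k ⧸ I))
    (d : ℕ) (hd : 1 ≤ d)
    (hdeg : ∀ (n : ℕ) (f : MvPolynomial (Fin 6) k) (hf : f ∈ I),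
      f ∈ homogeneousSubmodule (Fin 6) k n → δ ⟨f, hf⟩ ∈ W (n + d)) :
    δ = 0 :=
  positive_degree_hom_vanishes_general I hhom W hW h0 h1 h3 δ d hd hdeg
end

section
/- Let I ⊆ S = k[α_1,...,α_n] be an ideal and δ ∈ Hom_S(I, S/I). Then the set I' = { f − ε·δ(f) : f ∈ I } generates an ideal of S[ε] = S ⊗_k k[ε]/(ε²) such that S[ε]/I' is a flat k[ε]/(ε²)-module whose reduction modulo ε is S/I, provided S/I has finite k-dimension. -/
open MvPolynomial

attribute [-instance] Ideal.Quotient.commSemiring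

/-!
Every `g ∈ S[ε]` is uniquely `a + ε b` with `a, b ∈ S`, and reduction mod `ε` induces a map
`S[ε]/I' → S/I` with kernel `ε • (S[ε]/I')`. Over `k[ε]`, a module `M` whose `ε`-torsion lies in
`ε M` is free: lifts of a `k`-basis of `M/εM` span because `ε² = 0`, and they are independent
because a relation has coefficients in `(ε)`, hence is `ε` times a relation, which reduces to a
relation in `M/εM`. The torsion condition is where `δ` enters: if
`ε g₀ = Σ (aᵢ + ε bᵢ)(fᵢ - ε L fᵢ)`, then `Σ aᵢ fᵢ = 0` and
`g₀ ≡ -Σ aᵢ δ(fᵢ) = -δ(Σ aᵢ fᵢ) = 0` modulo `I`, by `S`-linearity of `δ`.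
-/

section SqZero

variable {R K M V ι : Type*} [CommRing R] [Field K] [AddCommGroup M] [Module R M]
  [AddCommGroup V] [Module K V] {π : R →+* K} {ε : R}

theorem span_range_eq_top_of_comp_of_sq_eq_zero [RingHomSurjective π] (hε : ε * ε = 0)
    (Φ : M →ₛₗ[π] V) (hΦ : ∀ x, Φ x = 0 → ∃ y, x = ε • y) {m : ι → M}
    (hm : Submodule.span K (Set.range (Φ ∘ m)) = ⊤) :
    Submodule.span R (Set.range m) = ⊤ := by
  set N := Submodule.span R (Set.range m)
  have hmod : ∀ x, ∃ y, x - ε • y ∈ N := by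
    intro x
    have hx : Φ x ∈ N.map Φ := by
      rw [Submodule.map_span, ← Set.range_comp, hm]
      exact Submodule.mem_top
    obtain ⟨x', hx'N, hx'⟩ := hx
    obtain ⟨y, hy⟩ := hΦ (x - x') (by rw [map_sub, hx', sub_self])
    exact ⟨y, by rwa [← hy, sub_sub_cancel]⟩
  refine eq_top_iff.mpr fun x _ => ?_
  obtain ⟨y, hy⟩ := hmod x
  obtain ⟨z, hz⟩ := hmod y
  have : x = (x - ε • y) + ε • (y - ε • z) := by
    rw [smul_sub, smul_smul, hε, zero_smul]
    abel
  rw [this]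
  exact N.add_mem hy (N.smul_mem ε hz)

theorem linearIndependent_of_comp_of_sq_eq_zero (hε : ε * ε = 0)
    (hπ : RingHom.ker π ≤ Ideal.span {ε}) (Φ : M →ₛₗ[π] V)
    (htor : ∀ x : M, ε • x = 0 → ∃ y, x = ε • y) {m : ι → M}
    (hm : LinearIndependent K (Φ ∘ m)) : LinearIndependent R m := by
  have hπε : π ε = 0 := mul_self_eq_zero.mp (by rw [← map_mul, hε, map_zero])
  have hred : ∀ (s : Finset ι) (g : ι → R) (y : M), ∑ i ∈ s, g i • m i = ε • y →
      ∀ i ∈ s, π (g i) = 0 := by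
    intro s g y hsum
    refine linearIndependent_iff'.mp hm s (fun i => π (g i)) ?_
    have := congrArg Φ hsum
    simpa only [map_sum, map_smulₛₗ, hπε, zero_smul, Function.comp_apply] using this
  refine linearIndependent_iff'.mpr fun s g hsum i hi => ?_
  choose! h hh using fun j (hj : j ∈ s) =>
    Ideal.mem_span_singleton.mp (hπ (hred s g 0 (by rw [hsum, smul_zero]) j hj))
  obtain ⟨y, hy⟩ := htor (∑ j ∈ s, h j • m j) <| by
    rw [Finset.smul_sum, ← hsum]
    exact Finset.sum_congr rfl fun j hj => by rw [smul_smul, ← hh j hj]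
  obtain ⟨t, ht⟩ := Ideal.mem_span_singleton.mp (hπ (hred s h y hy i hi))
  rw [hh i hi, ht, ← mul_assoc, hε, zero_mul]

theorem Module.free_of_sq_eq_zero [RingHomSurjective π] (hε : ε * ε = 0)
    (hπ : RingHom.ker π ≤ Ideal.span {ε}) (Φ : M →ₛₗ[π] V) (hΦ : Function.Surjective Φ)
    (hker : ∀ x, Φ x = 0 → ∃ y, x = ε • y) (htor : ∀ x : M, ε • x = 0 → ∃ y, x = ε • y) :
    Module.Free R M := by
  let b := Module.Free.chooseBasis K V
  choose m hm using fun i => hΦ (b i)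
  have hbm : Φ ∘ m = b := funext hm
  exact .of_basis <| Basis.mk (linearIndependent_of_comp_of_sq_eq_zero hε hπ Φ htor
    (hbm ▸ b.linearIndependent))
    (span_range_eq_top_of_comp_of_sq_eq_zero hε Φ hker (hbm ▸ b.span_eq)).ge

end SqZero

theorem MvPolynomial.smul_mk_eq_mk_C_mul {R σ : Type*} [CommRing R]
    (J : Ideal (MvPolynomial σ R)) (r : R) (g : MvPolynomial σ R) :
    r • Ideal.Quotient.mk J g = Ideal.Quotient.mk J (C r * g) := by
  rw [← smul_eq_C_mul]
  exact (Submodule.Quotient.mk_smul J r g).symm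

namespace TangentDeformation

variable {k σ : Type*}

local notation "kε" => Polynomial k ⧸ Ideal.span {(Polynomial.X : Polynomial k) ^ 2}
local notation "ε" =>
  (Ideal.Quotient.mk (Ideal.span {(Polynomial.X : Polynomial k) ^ 2}) Polynomial.X)

section CommRing

variable [CommRing k]

variable (k) in
noncomputable def evalZero : kε →ₐ[k] k :=
  Ideal.Quotient.liftₐ _ (Polynomial.aeval 0) fun p hp => by
    obtain ⟨q, rfl⟩ := Ideal.mem_span_singleton'.mp hp
    simp

@[simp]
theorem evalZero_mk (p : Polynomial k) : evalZero k (Ideal.Quotient.mk _ p) = p.eval 0 := by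
  simp [evalZero]

instance : RingHomSurjective (evalZero k).toRingHom :=
  ⟨fun c => ⟨algebraMap k kε c, by simp⟩⟩

theorem eps_mul_eps : ε * ε = (0 : kε) := by
  rw [← map_mul, Ideal.Quotient.eq_zero_iff_mem, ← pow_two]
  exact Ideal.mem_span_singleton_self _

theorem ker_evalZero : RingHom.ker (evalZero k) = Ideal.span {ε} := by
  refine le_antisymm (fun r hr => ?_) ?_
  · obtain ⟨p, rfl⟩ := Ideal.Quotient.mk_surjective r
    have hX : Polynomial.X ∣ p := by
      rwa [Polynomial.X_dvd_iff, Polynomial.coeff_zero_eq_eval_zero, ← evalZero_mk]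
    obtain ⟨q, rfl⟩ := hX
    rw [map_mul]
    exact Ideal.mul_mem_right _ _ (Ideal.mem_span_singleton_self _)
  · rw [Ideal.span_le, Set.singleton_subset_iff, SetLike.mem_coe, RingHom.mem_ker, evalZero_mk]
    simp

theorem eq_zero_of_eps_mul_algebraMap_eq_zero {c : k} (h : ε * algebraMap k kε c = 0) :
    c = 0 := by
  rw [show algebraMap k kε c = Ideal.Quotient.mk _ (Polynomial.C c) from rfl, ← map_mul,
    Ideal.Quotient.eq_zero_iff_mem, Ideal.mem_span_singleton'] at h
  obtain ⟨q, hq⟩ := h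
  have := congrArg (Polynomial.coeff · 1) hq
  simp only [mul_comm q, Polynomial.coeff_X_pow_mul', Polynomial.coeff_X_mul,
    Polynomial.coeff_C_zero] at this
  simpa using this.symm

theorem map_evalZero_map_algebraMap (p : MvPolynomial σ k) :
    map (evalZero k : kε →+* k) (map (algebraMap k kε) p) = p := by
  rw [map_map]
  convert map_id p
  ext c
  simp

theorem ker_map_evalZero :
    RingHom.ker (map (evalZero k : kε →+* k) : MvPolynomial σ kε →+* _) = Ideal.span {C ε} := by
  rw [ker_map, RingHom.ker_coe_toRingHom, ker_evalZero, Ideal.map_span, Set.image_singleton]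

theorem exists_eq_map_add_C_eps_mul (g : MvPolynomial σ kε) :
    ∃ h, g = map (algebraMap k kε) (map (evalZero k : kε →+* k) g) + C ε * h := by
  have hg : g - map (algebraMap k kε) (map (evalZero k : kε →+* k) g) ∈
      RingHom.ker (map (evalZero k : kε →+* k)) := by
    rw [RingHom.mem_ker, map_sub, map_evalZero_map_algebraMap, sub_self]
  rw [ker_map_evalZero, Ideal.mem_span_singleton'] at hg
  obtain ⟨h, hh⟩ := hg
  exact ⟨h, by rw [mul_comm, hh, add_sub_cancel]⟩

theorem C_eps_mul_C_eps : (C ε : MvPolynomial σ kε) * C ε = 0 := by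
  rw [← C_mul, eps_mul_eps, C_0]

theorem exists_eq_map_add_C_eps_mul_map (g : MvPolynomial σ kε) :
    ∃ a b, g = map (algebraMap k kε) a + C ε * map (algebraMap k kε) b := by
  obtain ⟨h, hh⟩ := exists_eq_map_add_C_eps_mul g
  obtain ⟨h', hh'⟩ := exists_eq_map_add_C_eps_mul h
  refine ⟨map (evalZero k : kε →+* k) g, map (evalZero k : kε →+* k) h, hh.trans ?_⟩
  conv_lhs => rw [hh', mul_add, ← mul_assoc, C_eps_mul_C_eps, zero_mul, add_zero]

theorem eq_zero_of_C_eps_mul_map_eq_zero {b : MvPolynomial σ k}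
    (h : C ε * map (algebraMap k kε) b = 0) : b = 0 := by
  ext m
  have := congrArg (coeff m) h
  rw [coeff_C_mul, coeff_map, coeff_zero] at this
  exact eq_zero_of_eps_mul_algebraMap_eq_zero this

variable {I : Ideal (MvPolynomial σ k)}

variable (I) in
noncomputable def reduceMod : MvPolynomial σ kε →ₐ[k] MvPolynomial σ k ⧸ I :=
  (Ideal.Quotient.mkₐ k I).comp (mapAlgHom (evalZero k))

theorem reduceMod_apply (g : MvPolynomial σ kε) :
    reduceMod I g = Ideal.Quotient.mk I (map (evalZero k : kε →+* k) g) := rfl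

theorem reduceMod_surjective : Function.Surjective (reduceMod I) := by
  intro y
  obtain ⟨p, rfl⟩ := Ideal.Quotient.mk_surjective y
  exact ⟨map (algebraMap k kε) p, by rw [reduceMod_apply, map_evalZero_map_algebraMap]⟩

noncomputable def deformation (L : I → MvPolynomial σ k) : Ideal (MvPolynomial σ kε) :=
  Ideal.span {g | ∃ f : I,
    g = map (algebraMap k kε) (f : MvPolynomial σ k) - C ε * map (algebraMap k kε) (L f)}

theorem ker_reduceMod (L : I → MvPolynomial σ k) :
    RingHom.ker (reduceMod I) = deformation L ⊔ Ideal.span {C ε} := by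
  refine le_antisymm (fun g hg => ?_) (sup_le ?_ ?_)
  · rw [RingHom.mem_ker, reduceMod_apply, Ideal.Quotient.eq_zero_iff_mem] at hg
    obtain ⟨h, hh⟩ := exists_eq_map_add_C_eps_mul g
    set a := map (evalZero k : kε →+* k) g
    rw [hh, show map (algebraMap k kε) a = (map (algebraMap k kε) a
      - C ε * map (algebraMap k kε) (L ⟨a, hg⟩)) + C ε * map (algebraMap k kε) (L ⟨a, hg⟩)
      by ring, add_assoc, ← mul_add]
    exact Ideal.add_mem _ (Ideal.mem_sup_left (Ideal.subset_span ⟨⟨a, hg⟩, rfl⟩))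
      (Ideal.mem_sup_right (Ideal.mul_mem_right _ _ (Ideal.mem_span_singleton_self _)))
  · rw [deformation, Ideal.span_le]
    rintro _ ⟨f, rfl⟩
    rw [SetLike.mem_coe, RingHom.mem_ker, reduceMod_apply, map_sub, map_mul,
      map_evalZero_map_algebraMap, map_C, Ideal.Quotient.eq_zero_iff_mem]
    simp [f.2]
  · rw [Ideal.span_le, Set.singleton_subset_iff, SetLike.mem_coe, RingHom.mem_ker,
      reduceMod_apply, map_C]
    simp

variable (δ : I →ₗ[MvPolynomial σ k] MvPolynomial σ k ⧸ I)

-- `I'` in components `a + ε b`; `S`-linearity of `δ` is what makes it closed under multiplication.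
noncomputable def tangentIdeal : Ideal (MvPolynomial σ kε) where
  carrier := {g | ∃ (a : I) (b : MvPolynomial σ k),
    g = map (algebraMap k kε) (a : MvPolynomial σ k) + C ε * map (algebraMap k kε) b ∧
      Ideal.Quotient.mk I b = -δ a}
  zero_mem' := ⟨0, 0, by simp, by simp⟩
  add_mem' := by
    rintro _ _ ⟨a, b, rfl, hab⟩ ⟨a', b', rfl, hab'⟩
    refine ⟨a + a', b + b', ?_, ?_⟩
    · simp only [Submodule.coe_add, map_add]
      ring
    · rw [map_add, hab, hab', map_add, neg_add]
  smul_mem' := by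
    rintro c _ ⟨a, b, rfl, hab⟩
    obtain ⟨c₀, c₁, rfl⟩ := exists_eq_map_add_C_eps_mul_map c
    refine ⟨c₀ • a, c₀ * b + c₁ * a, ?_, ?_⟩
    · simp only [smul_eq_mul, SetLike.val_smul, map_add, map_mul]
      linear_combination
        (map (algebraMap k kε) c₁ * map (algebraMap k kε) b) * C_eps_mul_C_eps (σ := σ) (k := k)
    · have hsmul : c₀ • Ideal.Quotient.mk I b = Ideal.Quotient.mk I (c₀ * b) :=
        (Submodule.Quotient.mk_smul I c₀ b).symm
      rw [map_smul, ← smul_neg, ← hab, hsmul, Ideal.Quotient.eq, add_sub_cancel_left]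
      exact Ideal.mul_mem_left _ _ a.2

theorem deformation_le_tangentIdeal {L : I → MvPolynomial σ k}
    (hL : ∀ f, Ideal.Quotient.mk I (L f) = δ f) : deformation L ≤ tangentIdeal δ := by
  rw [deformation, Ideal.span_le]
  rintro _ ⟨f, rfl⟩
  exact ⟨f, -L f, by rw [map_neg, mul_neg, sub_eq_add_neg], by rw [map_neg, hL]⟩

theorem mem_of_C_eps_mul_map_mem_tangentIdeal {b : MvPolynomial σ k}
    (hb : C ε * map (algebraMap k kε) b ∈ tangentIdeal δ) : b ∈ I := by
  obtain ⟨a, b', hbb', hab'⟩ := hb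
  have ha : (a : MvPolynomial σ k) = 0 := by
    simpa [map_mul, map_evalZero_map_algebraMap] using
      (congrArg (map (evalZero k : kε →+* k)) hbb').symm
  have hb' : b = b' := by
    rw [ha, map_zero, zero_add, ← sub_eq_zero, ← mul_sub, ← map_sub] at hbb'
    exact sub_eq_zero.mp (eq_zero_of_C_eps_mul_map_eq_zero hbb')
  rw [← Ideal.Quotient.eq_zero_iff_mem, hb', hab', show a = 0 from Subtype.ext ha, map_zero,
    neg_zero]

theorem mem_sup_of_C_eps_mul_mem_deformation {L : I → MvPolynomial σ k}
    (hL : ∀ f, Ideal.Quotient.mk I (L f) = δ f) {g : MvPolynomial σ kε}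
    (hg : C ε * g ∈ deformation L) : g ∈ deformation L ⊔ Ideal.span {C ε} := by
  obtain ⟨h, hh⟩ := exists_eq_map_add_C_eps_mul g
  rw [← ker_reduceMod L, RingHom.mem_ker, reduceMod_apply, Ideal.Quotient.eq_zero_iff_mem]
  refine mem_of_C_eps_mul_map_mem_tangentIdeal δ (deformation_le_tangentIdeal δ hL ?_)
  rwa [hh, mul_add, ← mul_assoc, C_eps_mul_C_eps, zero_mul, add_zero] at hg

noncomputable def reduceModQuotient (L : I → MvPolynomial σ k) :
    (MvPolynomial σ kε ⧸ deformation L) →ₛₗ[(evalZero k).toRingHom] MvPolynomial σ k ⧸ I where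
  toFun := Ideal.Quotient.lift _ (reduceMod I) fun g hg => by
    rw [← RingHom.mem_ker, RingHom.ker_coe_toRingHom, ker_reduceMod L]
    exact Ideal.mem_sup_left hg
  map_add' := map_add _
  map_smul' r x := by
    obtain ⟨g, rfl⟩ := Ideal.Quotient.mk_surjective x
    rw [smul_mk_eq_mk_C_mul, Ideal.Quotient.lift_mk, Ideal.Quotient.lift_mk]
    simp only [RingHom.coe_coe, map_mul, reduceMod_apply, map_C]
    rw [← map_mul, ← smul_eq_C_mul]
    exact Submodule.Quotient.mk_smul I _ _

theorem exists_mk_eq_eps_smul (L : I → MvPolynomial σ k) {g : MvPolynomial σ kε}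
    (hg : g ∈ deformation L ⊔ Ideal.span {C ε}) :
    ∃ y, Ideal.Quotient.mk (deformation L) g = ε • y := by
  obtain ⟨i, hi, _, hj, rfl⟩ := Submodule.mem_sup.mp hg
  obtain ⟨h, rfl⟩ := Ideal.mem_span_singleton.mp hj
  refine ⟨Ideal.Quotient.mk _ h, ?_⟩
  rw [smul_mk_eq_mk_C_mul, map_add, Ideal.Quotient.eq_zero_iff_mem.mpr hi, zero_add]

end CommRing

theorem free_quotient_deformation [Field k] {I : Ideal (MvPolynomial σ k)}
    (δ : I →ₗ[MvPolynomial σ k] MvPolynomial σ k ⧸ I) {L : I → MvPolynomial σ k}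
    (hL : ∀ f, Ideal.Quotient.mk I (L f) = δ f) :
    Module.Free kε (MvPolynomial σ kε ⧸ deformation L) := by
  refine Module.free_of_sq_eq_zero eps_mul_eps ker_evalZero.le (reduceModQuotient L) ?_ ?_ ?_
  · intro y
    obtain ⟨g, hg⟩ := reduceMod_surjective (I := I) y
    exact ⟨Ideal.Quotient.mk _ g, hg⟩
  · intro x hx
    obtain ⟨g, rfl⟩ := Ideal.Quotient.mk_surjective x
    refine exists_mk_eq_eps_smul L ?_
    rwa [← ker_reduceMod L]
  · intro x hx
    obtain ⟨g, rfl⟩ := Ideal.Quotient.mk_surjective x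
    rw [smul_mk_eq_mk_C_mul, Ideal.Quotient.eq_zero_iff_mem] at hx
    exact exists_mk_eq_eps_smul L (mem_sup_of_C_eps_mul_mem_deformation δ hL hx)

end TangentDeformation

open TangentDeformation in
theorem tangent_vector_gives_flat_family_general {k : Type*} [Field k] {n : ℕ}
    (I : Ideal (MvPolynomial (Fin n) k))
    (δ : I →ₗ[MvPolynomial (Fin n) k] (MvPolynomial (Fin n) k ⧸ I))
    (L : I → MvPolynomial (Fin n) k)
    (hL : ∀ f : I, Ideal.Quotient.mk I (L f) = δ f)
    (ε : Polynomial k ⧸ Ideal.span {(Polynomial.X : Polynomial k) ^ 2})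
    (hε : ε = Ideal.Quotient.mk _ Polynomial.X)
    (I' : Ideal (MvPolynomial (Fin n)
      (Polynomial k ⧸ Ideal.span {(Polynomial.X : Polynomial k) ^ 2})))
    (hI' : I' = Ideal.span
      {g | ∃ f : I,
        g = MvPolynomial.map (algebraMap k _) (f : MvPolynomial (Fin n) k)
          - C ε * MvPolynomial.map (algebraMap k _) (L f)}) :
    Module.Flat (Polynomial k ⧸ Ideal.span {(Polynomial.X : Polynomial k) ^ 2})
        (MvPolynomial (Fin n)
          (Polynomial k ⧸ Ideal.span {(Polynomial.X : Polynomial k) ^ 2}) ⧸ I')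
      ∧ Nonempty ((MvPolynomial (Fin n)
            (Polynomial k ⧸ Ideal.span {(Polynomial.X : Polynomial k) ^ 2}) ⧸
              (I' ⊔ Ideal.span {(C ε : MvPolynomial (Fin n)
                (Polynomial k ⧸ Ideal.span {(Polynomial.X : Polynomial k) ^ 2}))}))
          ≃ₐ[k] (MvPolynomial (Fin n) k ⧸ I)) := by
  subst hε hI'
  refine ⟨@Module.Flat.of_free _ _ _ _ _ (free_quotient_deformation δ hL), ⟨?_⟩⟩
  exact (Ideal.quotientEquivAlgOfEq k (ker_reduceMod L).symm).trans
    (Ideal.quotientKerAlgEquivOfSurjective reduceMod_surjective)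

/-- Let `I ⊆ S = k[α_1,…,α_n]` be an ideal with `S/I` finite dimensional over `k`, and let
`δ ∈ Hom_S(I, S/I)`. Choose a lift `L` of `δ` to `S`. Then the ideal
`I' = (f − ε·L(f) : f ∈ I)` of `S[ε] = S ⊗_k k[ε]/(ε²)` is such that `S[ε]/I'` is a flat
(equivalently, free) `k[ε]/(ε²)`-module whose reduction modulo `ε` is `S/I`. Here
`k[ε]/(ε²)` is realised as `k[T]/(T²)` with `ε` the class of `T`. -/
theorem tangent_vector_gives_flat_family {k : Type*} [Field k] {n : ℕ}
    (I : Ideal (MvPolynomial (Fin n) k))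
    (hfin : FiniteDimensional k (MvPolynomial (Fin n) k ⧸ I))
    (δ : I →ₗ[MvPolynomial (Fin n) k] (MvPolynomial (Fin n) k ⧸ I))
    (L : I → MvPolynomial (Fin n) k)
    (hL : ∀ f : I, Ideal.Quotient.mk I (L f) = δ f)
    (ε : Polynomial k ⧸ Ideal.span {(Polynomial.X : Polynomial k) ^ 2})
    (hε : ε = Ideal.Quotient.mk _ Polynomial.X)
    (I' : Ideal (MvPolynomial (Fin n)
      (Polynomial k ⧸ Ideal.span {(Polynomial.X : Polynomial k) ^ 2})))
    (hI' : I' = Ideal.span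
      {g | ∃ f : I,
        g = MvPolynomial.map (algebraMap k _) (f : MvPolynomial (Fin n) k)
          - C ε * MvPolynomial.map (algebraMap k _) (L f)}) :
    Module.Flat (Polynomial k ⧸ Ideal.span {(Polynomial.X : Polynomial k) ^ 2})
        (MvPolynomial (Fin n)
          (Polynomial k ⧸ Ideal.span {(Polynomial.X : Polynomial k) ^ 2}) ⧸ I')
      ∧ Nonempty ((MvPolynomial (Fin n)
            (Polynomial k ⧸ Ideal.span {(Polynomial.X : Polynomial k) ^ 2}) ⧸
              (I' ⊔ Ideal.span {(C ε : MvPolynomial (Fin n)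
                (Polynomial k ⧸ Ideal.span {(Polynomial.X : Polynomial k) ^ 2}))}))
          ≃ₐ[k] (MvPolynomial (Fin n) k ⧸ I)) :=
  tangent_vector_gives_flat_family_general I δ L hL ε hε I' hI'
end

section
/- Let C be a finite free k[t]-algebra of the form C = k[t, α_1,...,α_n]/H^⊥ for some H ∈ k[t, x_1,...,x_n], where H^⊥ is the kernel of the evaluation map ev_H : k[t, α] → k[t, x], and define Φ : C → Hom_{k[t]}(C, k[t]) by Φ(c)(d) = (ev_{c ∘ H}(d))(x = 0). Then Φ is injective. -/
/-!
For `F ∈ k[t, x]` and a multi-index `μ` in the `x`-variables, `(α^μ ∘ F)(x = 0)` has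
`t^a`-coefficient `μ!` times the coefficient of `t^a x^μ` in `F`. In characteristic zero the
values `(d ∘ F)(x = 0)` therefore determine `F`; applied to `F = c ∘ H` this shows that `Φ(c) = 0`
forces `c ∘ H = 0`, i.e. `c ∈ H^⊥`.
-/

open MvPolynomial

namespace MvPolynomial

variable {R : Type*} [CommSemiring R] {σ τ : Type*}

theorem aeval_optionElim_X_zero_eq_map_optionEquivLeft (p : MvPolynomial (Option τ) R) :
    aeval (fun v : Option τ => v.elim Polynomial.X fun _ => 0) p =
      (optionEquivLeft R τ p).map constantCoeff := by
  change (aeval _).toRingHom p =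
    ((Polynomial.mapRingHom constantCoeff).comp (optionEquivLeft R τ).toRingHom) p
  congr 1
  refine ringHom_ext (fun r => ?_) (Option.rec ?_ fun v => ?_) <;>
    simp

theorem coeff_aeval_optionElim_X_zero (p : MvPolynomial (Option τ) R) (a : ℕ) :
    (aeval (fun v : Option τ => v.elim Polynomial.X fun _ => 0) p).coeff a =
      coeff (Finsupp.single none a) p := by
  have hdeg : (0 : τ →₀ ℕ).optionElim a = Finsupp.single none a := by ext (_ | v) <;> simp
  rw [aeval_optionElim_X_zero_eq_map_optionEquivLeft, Polynomial.coeff_map, constantCoeff_eq,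
    optionEquivLeft_coeff_coeff, hdeg]

theorem coeff_pderiv_pow [DecidableEq σ] (i : σ) (e : ℕ) (ν : σ →₀ ℕ) (p : MvPolynomial σ R) :
    coeff ν (((pderiv i).toLinearMap ^ e) p) =
      coeff (ν + Finsupp.single i e) p * (ν i + 1).ascFactorial e := by
  induction e generalizing ν p with
  | zero => simp
  | succ e ih =>
    rw [pow_succ, Module.End.mul_apply, ih, Derivation.coeFn_coe, coeff_pderiv,
      Nat.ascFactorial_succ, add_assoc, ← Finsupp.single_add]
    simp only [Finsupp.add_apply, Finsupp.single_eq_same]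
    push_cast
    ring

theorem coeff_foldr_pow_pderiv [DecidableEq σ] (m : σ →₀ ℕ)
    (op : σ → Module.End R (MvPolynomial σ R)) (l : List σ) (hl : l.Nodup)
    (hop : ∀ i ∈ l, op i = (pderiv i).toLinearMap) (ν : σ →₀ ℕ) (hν : ∀ i ∈ l, ν i = 0)
    (p : MvPolynomial σ R) :
    coeff ν (l.foldr (fun i L => op i ^ m i * L) 1 p) =
      coeff (ν + (l.map fun i => Finsupp.single i (m i)).sum) p *
        (l.map fun i => (m i).factorial).prod := by
  induction l generalizing ν with
  | nil => simp
  | cons i l ih =>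
    obtain ⟨hil, hl⟩ := List.nodup_cons.mp hl
    have hν' : ∀ j ∈ l, (ν + Finsupp.single i (m i)) j = 0 := fun j hj => by
      rw [Finsupp.add_apply, hν j (List.mem_cons_of_mem i hj),
        Finsupp.single_eq_of_ne (ne_of_mem_of_not_mem hj hil), add_zero]
    rw [List.foldr_cons, hop i List.mem_cons_self, Module.End.mul_apply, coeff_pderiv_pow,
      ih hl (fun j hj => hop j (List.mem_cons_of_mem i hj)) _ hν', hν i List.mem_cons_self,
      Nat.one_ascFactorial, List.map_cons, List.map_cons, List.sum_cons, List.prod_cons,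
      add_assoc]
    push_cast
    ring

theorem coeff_opPow_of_eq_pderiv [DecidableEq σ] (op : σ → Module.End R (MvPolynomial σ R))
    (m : σ →₀ ℕ) (hop : ∀ i ∈ m.support, op i = (pderiv i).toLinearMap) (ν : σ →₀ ℕ)
    (hν : ∀ i ∈ m.support, ν i = 0) (p : MvPolynomial σ R) :
    coeff ν (opPow op m p) = coeff (ν + m) p * ∏ i ∈ m.support, ((m i).factorial : R) := by
  have hm : ∑ i ∈ m.support, Finsupp.single i (m i) = m := Finsupp.sum_single m
  rw [opPow, coeff_foldr_pow_pderiv m op _ m.support.nodup_toList (by simpa using hop) ν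
    (by simpa using hν), Finset.sum_map_toList, hm, Finset.prod_map_toList, Nat.cast_prod]

theorem tAct_monomial_one [Nontrivial R] [DecidableEq τ] (m : Option τ →₀ ℕ)
    (F : MvPolynomial (Option τ) R) : tAct (monomial m 1) F = opPow tOp m F := by
  classical
  rw [tAct, apAct, support_monomial, if_neg one_ne_zero, Finset.sum_singleton, coeff_monomial,
    if_pos rfl, one_smul]

theorem eq_zero_of_forall_aeval_tAct_eq_zero [NoZeroDivisors R] [CharZero R] [DecidableEq τ]
    (F : MvPolynomial (Option τ) R)
    (hF : ∀ d : MvPolynomial (Option τ) R,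
      aeval (fun v : Option τ => v.elim (Polynomial.X : Polynomial R) fun _ => 0) (tAct d F) = 0) :
    F = 0 := by
  ext μ
  set m := μ.erase none
  have hm : ∀ i ∈ m.support, i ≠ none := fun i hi h => by simp [m, h] at hi
  have key := coeff_opPow_of_eq_pderiv tOp m
    (fun | none, hi => absurd rfl (hm _ hi) | some _, _ => rfl)
    (Finsupp.single none (μ none)) (fun i hi => Finsupp.single_eq_of_ne (hm i hi)) F
  rw [Finsupp.single_add_erase, ← tAct_monomial_one, ← coeff_aeval_optionElim_X_zero,
    hF, Polynomial.coeff_zero, eq_comm, mul_eq_zero] at key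
  exact key.resolve_right (Finset.prod_ne_zero_iff.mpr fun i _ =>
    Nat.cast_ne_zero.mpr (Nat.factorial_ne_zero _))

end MvPolynomial

/-- **Injectivity of the duality map `Φ`.** Let `C = k[t,α]/H^⊥` for `H ∈ k[t,x]`, where
`H^⊥` is the annihilator of `H` for the relative apolarity action (`t = X none` acting by
multiplication, `α_i = X (some i)` acting as `∂/∂x_i`), and assume `C` is a finite free
`k[t]`-module (`t` acting through the image of `X none`). Then the map
`Φ : C → Hom_{k[t]}(C, k[t])`, `Φ(c)(d) = (ev_{c ∘ H}(d))(x = 0)`, is injective; on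
representatives this says: if `(d ∘ (c ∘ H))(x = 0) = 0` for all `d ∈ k[t,α]`, then
`c ∈ H^⊥`. -/
theorem duality_map_injective {k : Type*} [Field k] [CharZero k] {n : ℕ}
    (H : MvPolynomial (Option (Fin n)) k) :
    letI J : Ideal (MvPolynomial (Option (Fin n)) k) :=
      Ideal.span {h : MvPolynomial (Option (Fin n)) k | tAct h H = 0}
    letI : Algebra (Polynomial k) (MvPolynomial (Option (Fin n)) k ⧸ J) :=
      (Polynomial.aeval (Ideal.Quotient.mk J (X none))).toRingHom.toAlgebra
    letI z : MvPolynomial (Option (Fin n)) k →ₐ[k] Polynomial k :=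
      aeval fun v : Option (Fin n) => v.elim Polynomial.X fun _ => 0
    Module.Free (Polynomial k) (MvPolynomial (Option (Fin n)) k ⧸ J) →
    Module.Finite (Polynomial k) (MvPolynomial (Option (Fin n)) k ⧸ J) →
    ∀ c : MvPolynomial (Option (Fin n)) k,
      (∀ d : MvPolynomial (Option (Fin n)) k, z (tAct d (tAct c H)) = 0) → c ∈ J := by
  intro _ _ c hc
  exact Ideal.subset_span (eq_zero_of_forall_aeval_tAct_eq_zero _ hc)
end
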